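/- Let β > 1 and h > 0, let m₀ ∈ (0,1) be the largest solution in (−1,1) of the Curie-Weiss equation m = tanh(β(m+h)), and let 0 < δ < 1/2. Then lim_{n→∞} sup { |4(P₊ⁿ(η) + P₋ⁿ(η)) − σ(h,β)²| : η ∈ ℝ, |η| ≤ n^δ, |m₀ + n^{−1/2}η| ≤ 1 } = 0, where σ(h,β) := 2√(1 − m₀). (In words: the one-step second moment n·E_η[(Y − η)²] of the Metropolis-Hastings chain converges to σ(h,β)² = 4(1 − m₀) uniformly for |η| ≤ n^δ.) -/

import Mathlib

/-- Proposal probability of an up-move: `Q₊ⁿ(η) = ½(1 - (m₀ + n^{-1/2}η))`. -/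
noncomputable def Qplus (m₀ : ℝ) (n : ℕ) (η : ℝ) : ℝ :=
  (1 - (m₀ + η / Real.sqrt n)) / 2

/-- Proposal probability of a down-move: `Q₋ⁿ(η) = ½(1 + (m₀ + n^{-1/2}η))`. -/
noncomputable def Qminus (m₀ : ℝ) (n : ℕ) (η : ℝ) : ℝ :=
  (1 + (m₀ + η / Real.sqrt n)) / 2

/-- Potential `Φⁿ(η) = -½η² - √n (m₀ + h) η`. -/
noncomputable def Phi (m₀ h : ℝ) (n : ℕ) (η : ℝ) : ℝ :=
  -(1 / 2) * η ^ 2 - Real.sqrt n * (m₀ + h) * η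

/-- Metropolis-Hastings up-move probability
`P₊ⁿ(η) = Q₊ⁿ(η) · min(1, exp(β[Φⁿ(η) - Φⁿ(η + 2n^{-1/2})]))`. -/
noncomputable def Pplus (β h m₀ : ℝ) (n : ℕ) (η : ℝ) : ℝ :=
  Qplus m₀ n η *
    min 1 (Real.exp (β * (Phi m₀ h n η - Phi m₀ h n (η + 2 / Real.sqrt n))))

/-- Metropolis-Hastings down-move probability
`P₋ⁿ(η) = Q₋ⁿ(η) · min(1, exp(β[Φⁿ(η) - Φⁿ(η - 2n^{-1/2})]))`. -/
noncomputable def Pminus (β h m₀ : ℝ) (n : ℕ) (η : ℝ) : ℝ :=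
  Qminus m₀ n η *
    min 1 (Real.exp (β * (Phi m₀ h n η - Phi m₀ h n (η - 2 / Real.sqrt n))))

/-- `m₀` is the largest solution in `(-1,1)` of the Curie-Weiss equation
`m = tanh(β(m+h))`, and it lies in `(0,1)`. -/
def IsLargestCWRoot (β h m₀ : ℝ) : Prop :=
  m₀ ∈ Set.Ioo (0 : ℝ) 1 ∧ m₀ = Real.tanh (β * (m₀ + h)) ∧
    ∀ m ∈ Set.Ioo (-1 : ℝ) 1, m = Real.tanh (β * (m + h)) → m ≤ m₀

/-!
At scale `t = n^{-1/2}η`, `s = 1/n`, the Metropolis filter accepts every up-move as soon as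
`|t| + s ≤ m₀ + h`, while a down-move is accepted with probability
`exp (2β (s - t - (m₀ + h)))`. Hence `4 (P₊ⁿ + P₋ⁿ)` is a fixed continuous function of `(t, s)`,
and both coordinates tend to `0` uniformly on `|η| ≤ n^δ` because `δ < 1/2`. At `(0, 0)` its
value is `2 (1 - m₀) + 2 (1 + m₀) e^{-2β(m₀+h)}`, and the Curie-Weiss equation
`m₀ = tanh (β (m₀ + h))` turns this into `4 (1 - m₀)`.
-/

open Real Filter Topology

theorem one_add_tanh_mul_exp_neg_two_mul (x : ℝ) :
    (1 + tanh x) * exp (-(2 * x)) = 1 - tanh x := by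
  have hcosh := (cosh_pos x).ne'
  calc (1 + tanh x) * exp (-(2 * x)) = (cosh x + sinh x) * exp (-(2 * x)) / cosh x := by
        rw [tanh_eq_sinh_div_cosh]; field_simp
    _ = (cosh x - sinh x) / cosh x := by
        rw [cosh_add_sinh, cosh_sub_sinh, ← exp_add]; ring_nf
    _ = 1 - tanh x := by rw [tanh_eq_sinh_div_cosh]; field_simp

theorem exists_forall_abs_sub_lt_of_continuousAt {f : ℝ × ℝ → ℝ} (hf : ContinuousAt f (0, 0))
    {ε : ℝ} (hε : 0 < ε) :
    ∃ κ > 0, ∀ t s : ℝ, |t| < κ → |s| < κ → |f (t, s) - f (0, 0)| < ε := by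
  obtain ⟨κ, hκ, hf⟩ := Metric.continuousAt_iff.1 hf ε hε
  refine ⟨κ, hκ, fun t s ht hs => ?_⟩
  have hdist : dist (t, s) ((0 : ℝ), (0 : ℝ)) < κ := by
    simpa [Prod.dist_eq, Real.dist_eq] using max_lt ht hs
  simpa [Real.dist_eq] using hf hdist

theorem eventually_abs_div_sqrt_lt {δ κ : ℝ} (hδ : δ < 1 / 2) (hκ : 0 < κ) :
    ∀ᶠ n : ℕ in atTop, ∀ η : ℝ, |η| ≤ (n : ℝ) ^ δ → |η / √n| < κ := by
  have hlim : Tendsto (fun n : ℕ => (n : ℝ) ^ (δ - 1 / 2)) atTop (𝓝 0) := by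
    have := (tendsto_rpow_neg_atTop (by linarith : 0 < 1 / 2 - δ)).comp
      tendsto_natCast_atTop_atTop
    exact this.congr fun n => by simp only [Function.comp_apply, neg_sub]
  filter_upwards [hlim.eventually_lt_const hκ, eventually_gt_atTop 0] with n hn hpos η hη
  have hpos : (0 : ℝ) < n := Nat.cast_pos.2 hpos
  calc |η / √n| = |η| / √n := by rw [abs_div, abs_of_pos (sqrt_pos.2 hpos)]
    _ ≤ (n : ℝ) ^ δ / √n := by gcongr
    _ = (n : ℝ) ^ (δ - 1 / 2) := by rw [rpow_sub hpos, sqrt_eq_rpow]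
    _ < κ := hn

section Metropolis

variable {β h m₀ : ℝ} {n : ℕ}

theorem Phi_sub_Phi_add (hn : n ≠ 0) (η : ℝ) :
    Phi m₀ h n η - Phi m₀ h n (η + 2 / √n) = 2 * (η / √n + 1 / n + (m₀ + h)) := by
  have hsq : √(n : ℝ) ^ 2 = n := sq_sqrt (Nat.cast_nonneg n)
  simp only [Phi]
  field_simp
  linear_combination -4 * hsq

theorem Phi_sub_Phi_sub (hn : n ≠ 0) (η : ℝ) :
    Phi m₀ h n η - Phi m₀ h n (η - 2 / √n) = 2 * (1 / n - η / √n - (m₀ + h)) := by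
  have hsq : √(n : ℝ) ^ 2 = n := sq_sqrt (Nat.cast_nonneg n)
  simp only [Phi]
  field_simp
  linear_combination -4 * hsq

theorem Pplus_eq_Qplus (hβ : 0 ≤ β) (hn : n ≠ 0) {η : ℝ}
    (hη : 0 ≤ η / √n + 1 / n + (m₀ + h)) : Pplus β h m₀ n η = Qplus m₀ n η := by
  rw [Pplus, Phi_sub_Phi_add hn, min_eq_left (one_le_exp (by positivity)), mul_one]

theorem Pminus_eq_Qminus_mul_exp (hβ : 0 ≤ β) (hn : n ≠ 0) {η : ℝ}
    (hη : 1 / n - η / √n - (m₀ + h) ≤ 0) :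
    Pminus β h m₀ n η = Qminus m₀ n η * exp (2 * β * (1 / n - η / √n - (m₀ + h))) := by
  have hexp : 2 * β * (1 / n - η / √n - (m₀ + h)) ≤ 0 :=
    mul_nonpos_of_nonneg_of_nonpos (by positivity) hη
  rw [Pminus, Phi_sub_Phi_sub hn, min_eq_right (exp_le_one_iff.2 (by linarith))]
  ring_nf

/-- `4 (P₊ⁿ(η) + P₋ⁿ(η))` in the coordinates `t = n^{-1/2}η`, `s = 1/n`, valid once the up-move
is always accepted. -/
noncomputable def secondMomentProfile (β h m₀ t s : ℝ) : ℝ :=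
  2 * (1 - (m₀ + t)) + 2 * (1 + (m₀ + t)) * exp (2 * β * (s - t - (m₀ + h)))

theorem continuous_secondMomentProfile (β h m₀ : ℝ) :
    Continuous fun p : ℝ × ℝ => secondMomentProfile β h m₀ p.1 p.2 := by
  unfold secondMomentProfile
  fun_prop

theorem secondMomentProfile_zero_zero (hcw : m₀ = tanh (β * (m₀ + h))) :
    secondMomentProfile β h m₀ 0 0 = 4 * (1 - m₀) := by
  have key := one_add_tanh_mul_exp_neg_two_mul (β * (m₀ + h))
  rw [← hcw] at key
  have hexp : 2 * β * (0 - 0 - (m₀ + h)) = -(2 * (β * (m₀ + h))) := by ring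
  rw [secondMomentProfile, hexp, add_zero]
  linear_combination 2 * key

theorem four_mul_Pplus_add_Pminus (hβ : 0 ≤ β) (hn : n ≠ 0) {η : ℝ}
    (hη : |η / √n| + 1 / n ≤ m₀ + h) :
    4 * (Pplus β h m₀ n η + Pminus β h m₀ n η) =
      secondMomentProfile β h m₀ (η / √n) (1 / n) := by
  have hlo := neg_abs_le (η / √n)
  have hhi := le_abs_self (η / √n)
  have hinv : (0 : ℝ) ≤ 1 / n := by positivity
  rw [Pplus_eq_Qplus hβ hn (by linarith), Pminus_eq_Qminus_mul_exp hβ hn (by linarith),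
    Qplus, Qminus, secondMomentProfile]
  ring

end Metropolis

theorem metropolis_second_moment_limit_general (β h m₀ δ : ℝ) (hβ : 1 < β) (hh : 0 < h)
    (hm₀ : IsLargestCWRoot β h m₀) (hδ' : δ < 1 / 2) :
    ∀ ε > (0 : ℝ), ∀ᶠ n : ℕ in Filter.atTop,
      ∀ η : ℝ, |η| ≤ (n : ℝ) ^ δ → |m₀ + η / Real.sqrt n| ≤ 1 →
        |4 * (Pplus β h m₀ n η + Pminus β h m₀ n η) -
          (2 * Real.sqrt (1 - m₀)) ^ 2| < ε := by
  obtain ⟨⟨hm0, hm1⟩, hcw, -⟩ := hm₀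
  intro ε hε
  obtain ⟨κ, hκ, hclose⟩ := exists_forall_abs_sub_lt_of_continuousAt
    (continuous_secondMomentProfile β h m₀).continuousAt hε
  set r := min κ ((m₀ + h) / 2)
  have hr : 0 < r := lt_min hκ (by linarith)
  have hrκ : r ≤ κ := min_le_left _ _
  have hr_half : r ≤ (m₀ + h) / 2 := min_le_right _ _
  filter_upwards [eventually_abs_div_sqrt_lt hδ' hr,
    tendsto_one_div_atTop_nhds_zero_nat.eventually_lt_const hr, eventually_ne_atTop 0]
    with n ht hs hn η hη _
  have ht := ht η hη
  have hσ : (2 * √(1 - m₀)) ^ 2 = 4 * (1 - m₀) := by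
    rw [mul_pow, sq_sqrt (by linarith)]; norm_num
  rw [four_mul_Pplus_add_Pminus (by linarith) hn (by linarith), hσ,
    ← secondMomentProfile_zero_zero hcw]
  exact hclose _ _ (by linarith) (by rw [abs_of_pos (by positivity)]; linarith)

/-- uniform second-moment convergence: for `β > 1`, `h > 0`, `m₀` the
largest solution of the Curie-Weiss equation, `0 < δ < 1/2` and `σ(h,β) = 2√(1-m₀)`,
the one-step second moment `n·E_η[(Y-η)²] = 4(P₊ⁿ(η) + P₋ⁿ(η))` converges to
`σ(h,β)² = 4(1-m₀)` uniformly over `{η : |η| ≤ n^δ, |m₀ + n^{-1/2}η| ≤ 1}`, i.e.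
`lim_{n→∞} sup |4(P₊ⁿ(η) + P₋ⁿ(η)) - σ(h,β)²| = 0`. -/
theorem metropolis_second_moment_limit (β h m₀ δ : ℝ) (hβ : 1 < β) (hh : 0 < h)
    (hm₀ : IsLargestCWRoot β h m₀) (hδ : 0 < δ) (hδ' : δ < 1 / 2) :
    ∀ ε > (0 : ℝ), ∀ᶠ n : ℕ in Filter.atTop,
      ∀ η : ℝ, |η| ≤ (n : ℝ) ^ δ → |m₀ + η / Real.sqrt n| ≤ 1 →
        |4 * (Pplus β h m₀ n η + Pminus β h m₀ n η) -
          (2 * Real.sqrt (1 - m₀)) ^ 2| < ε :=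
  metropolis_second_moment_limit_general β h m₀ δ hβ hh hm₀ hδ'
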